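/- With p, p_t, P_d as above and q(t) := ∫_{∂B_1} |∇_τ p|² dσ + 4∫_{∂B_1}(p − P_d)² dσ − (1/(2d))∫_{∂B_1} |∇_τ p|²/p_t dσ defined for t in an open interval where p_t > 0 on ∂B_1, the second derivative satisfies q''(t) = −(1/d) ∫_{∂B_1} (|∇_τ p|²/p_t³)(p − P_d)² dσ ≤ 0; in particular q is concave on that interval. -/

import Mathlib

/-!
On the unit sphere `P_d ≡ 1/(2d)`, so `p_t = c + t (p - P_d)` with `c = 1/(2d)` is affine in
`t` and `q t = const - c ∫ |∇_τ p|² / (c + t u)` with `u = p - P_d`. Differentiating twice under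
the integral sign gives `2 ∫ |∇_τ p|² u² / (c + t u)³`; this is legitimate because the integrands
are continuous on the compact sphere and `c + t u` stays bounded away from `0` near `t`. The
sphere has finite `(d-1)`-dimensional Hausdorff measure since it is covered by two Lipschitz
images of a ball in `ℝ^(d-1)`: an inverse stereographic projection and its negative.
-/

open MeasureTheory Metric Module Submodule Topology
open scoped RealInnerProductSpace

section Sphere

variable {E : Type*} [NormedAddCommGroup E] [InnerProductSpace ℝ E]

lemma norm_stereoToFun_le_two {v x : E} (hx : ‖x‖ = 1) (hvx : ⟪v, x⟫ ≤ 0) :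
    ‖stereoToFun v x‖ ≤ 2 := by
  have hden : 1 ≤ 1 - ⟪v, x⟫ := by linarith
  have hcoef : ‖2 / (1 - innerSL ℝ v x)‖ ≤ 2 := by
    rw [innerSL_apply_apply, Real.norm_eq_abs, abs_of_pos (by positivity)]
    exact div_le_self zero_le_two hden
  have hproj : ‖(ℝ ∙ v)ᗮ.orthogonalProjectionOnto x‖ ≤ 1 :=
    hx ▸ (ℝ ∙ v)ᗮ.norm_orthogonalProjectionOnto_apply_le x
  rw [stereoToFun_apply, norm_smul]
  exact (mul_le_mul hcoef hproj (norm_nonneg _) zero_le_two).trans_eq (mul_one 2)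

lemma sphere_subset_stereoInvFunAux_image {v : E} (hv : ‖v‖ = 1) :
    sphere (0 : E) 1 ⊆
      (fun w : (ℝ ∙ v)ᗮ => stereoInvFunAux v w) '' closedBall 0 2 ∪
        (fun w : (ℝ ∙ v)ᗮ => -stereoInvFunAux v w) '' closedBall 0 2 := by
  have key : ∀ x ∈ sphere (0 : E) 1, ⟪v, x⟫ ≤ 0 →
      x ∈ (fun w : (ℝ ∙ v)ᗮ => stereoInvFunAux v w) '' closedBall 0 2 := by
    intro x hx hvx
    have hxv : x ≠ v := by
      rintro rfl
      norm_num [hv] at hvx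
    rw [mem_sphere_zero_iff_norm] at hx
    refine ⟨stereoToFun v x, by simpa using norm_stereoToFun_le_two hx hvx, ?_⟩
    exact congrArg Subtype.val (stereo_left_inv hv (x := ⟨x, by simpa using hx⟩) hxv)
  intro x hx
  rcases le_total ⟪v, x⟫ 0 with hvx | hvx
  · exact Or.inl (key x hx hvx)
  · obtain ⟨w, hw, hwx⟩ := key (-x) (by simpa using hx) (by simpa using hvx)
    exact Or.inr ⟨w, hw, neg_eq_iff_eq_neg.mpr hwx⟩

lemma hausdorffMeasure_sphere_lt_top [FiniteDimensional ℝ E] [MeasurableSpace E]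
    [BorelSpace E] :
    μH[(finrank ℝ E : ℝ) - 1] (sphere (0 : E) 1) < ⊤ := by
  rcases subsingleton_or_nontrivial E with hE | hE
  · simp [sphere_eq_empty_of_subsingleton one_ne_zero]
  obtain ⟨v, hv⟩ := exists_norm_eq E zero_le_one
  obtain ⟨n, hn⟩ : ∃ n, finrank ℝ E = n + 1 := ⟨_, (Nat.succ_pred_eq_of_pos finrank_pos).symm⟩
  have : Fact (finrank ℝ E = n + 1) := ⟨hn⟩
  have hdim : (finrank ℝ E : ℝ) - 1 = finrank ℝ (ℝ ∙ v)ᗮ := by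
    rw [finrank_orthogonal_span_singleton (n := n) (norm_ne_zero_iff.mp (by simp [hv])), hn]
    push_cast; ring
  obtain ⟨K, hK⟩ : ∃ K, LipschitzOnWith K (fun w : (ℝ ∙ v)ᗮ => stereoInvFunAux v w)
      (closedBall 0 2) :=
    (contDiff_stereoInvFunAux.comp (ℝ ∙ v)ᗮ.subtypeL.contDiff).contDiffOn
      |>.exists_lipschitzOnWith one_ne_zero (convex_closedBall 0 2) (isCompact_closedBall 0 2)
  have hball : μH[(finrank ℝ (ℝ ∙ v)ᗮ : ℝ)] (closedBall (0 : (ℝ ∙ v)ᗮ) 2) < ⊤ :=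
    measure_closedBall_lt_top
  have himage : ∀ {f : (ℝ ∙ v)ᗮ → E}, LipschitzOnWith K f (closedBall 0 2) →
      μH[(finrank ℝ (ℝ ∙ v)ᗮ : ℝ)] (f '' closedBall 0 2) < ⊤ := fun hf =>
    (hf.hausdorffMeasure_image_le (Nat.cast_nonneg _)).trans_lt
      (ENNReal.mul_lt_top (ENNReal.rpow_lt_top_of_nonneg (Nat.cast_nonneg _) ENNReal.coe_ne_top)
        hball)
  rw [hdim]
  exact (measure_mono (sphere_subset_stereoInvFunAux_image hv)).trans_lt
    ((measure_union_le _ _).trans_lt (ENNReal.add_lt_top.2 ⟨himage hK, himage <| by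
      simpa [Function.comp_def] using LipschitzWith.id.neg.comp_lipschitzOnWith hK⟩))

end Sphere

lemma ContDiff.continuous_gradient {F : Type*} [NormedAddCommGroup F] [InnerProductSpace ℝ F]
    [CompleteSpace F] {f : F → ℝ} (hf : ContDiff ℝ 1 f) : Continuous (gradient f) :=
  (InnerProductSpace.toDual ℝ F).symm.continuous.comp (hf.continuous_fderiv one_ne_zero)

lemma abs_div_pow_le {a b C δ : ℝ} (hδ : 0 < δ) (ha : |a| ≤ C) (hb : δ ≤ b) (k : ℕ) :
    |a / b ^ k| ≤ C / δ ^ k := by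
  rw [abs_div, abs_pow, abs_of_pos (hδ.trans_le hb)]
  exact div_le_div₀ ((abs_nonneg a).trans ha) ha (pow_pos hδ k) (pow_le_pow_left₀ hδ.le hb k)

lemma hasDerivAt_div_pow_affine (a c u s : ℝ) (k : ℕ) (hs : c + s * u ≠ 0) :
    HasDerivAt (fun r => a / (c + r * u) ^ k) (-(k * a * u / (c + s * u) ^ (k + 1))) s := by
  have hlin : HasDerivAt (fun r => c + r * u) u s := by
    simpa using ((hasDerivAt_id s).mul_const u).const_add c
  refine ((hasDerivAt_const s a).fun_div (hlin.fun_pow k) (pow_ne_zero k hs)).congr_deriv ?_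
  rcases k with _ | k
  · simp
  · rw [Nat.add_sub_cancel]
    field_simp
    ring

lemma half_le_add_mul {c u δ t s : ℝ} (hlow : δ ≤ c + t * u) (hs : |s - t| * |u| ≤ δ / 2) :
    δ / 2 ≤ c + s * u := by
  have h := neg_abs_le ((s - t) * u)
  rw [abs_mul] at h
  linarith [show c + s * u = c + t * u + (s - t) * u by ring]

section ParametricIntegral

variable {α : Type*} [MeasurableSpace α] {μ : Measure α} {g u : α → ℝ} {c t δ Cg Cu : ℝ}

lemma exists_ae_forall_mem_ball_half_le (hδ : 0 < δ) (huC : ∀ᵐ x ∂μ, |u x| ≤ Cu)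
    (hlow : ∀ᵐ x ∂μ, δ ≤ c + t * u x) :
    ∃ ε > 0, ∀ᵐ x ∂μ, ∀ s ∈ ball t ε, δ / 2 ≤ c + s * u x := by
  obtain ⟨ε, hε, hεCu⟩ := exists_pos_mul_lt (half_pos hδ) Cu
  refine ⟨ε, hε, ?_⟩
  filter_upwards [huC, hlow] with x hux hlowx s hs
  rw [mem_ball, Real.dist_eq] at hs
  refine half_le_add_mul hlowx ?_
  nlinarith [abs_nonneg (u x), abs_nonneg (s - t)]

variable [IsFiniteMeasure μ]

lemma hasDerivAt_integral_div_pow (hg : Measurable g) (hu : Measurable u)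
    (hδ : 0 < δ) (hgC : ∀ᵐ x ∂μ, |g x| ≤ Cg) (huC : ∀ᵐ x ∂μ, |u x| ≤ Cu)
    (hlow : ∀ᵐ x ∂μ, δ ≤ c + t * u x) (k : ℕ) :
    HasDerivAt (fun s => ∫ x, g x / (c + s * u x) ^ k ∂μ)
      (∫ x, -(k * g x * u x / (c + t * u x) ^ (k + 1)) ∂μ) t := by
  obtain ⟨ε, hε, hnear⟩ := exists_ae_forall_mem_ball_half_le hδ huC hlow
  have hmeas : ∀ s, AEStronglyMeasurable (fun x => g x / (c + s * u x) ^ k) μ := fun s =>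
    Measurable.aestronglyMeasurable (by fun_prop)
  have hint : Integrable (fun x => g x / (c + t * u x) ^ k) μ := by
    refine .of_bound (hmeas t) (Cg / δ ^ k) ?_
    filter_upwards [hgC, hlow] with x hgx hlowx
    exact abs_div_pow_le hδ hgx hlowx k
  refine (hasDerivAt_integral_of_dominated_loc_of_deriv_le (ball_mem_nhds t hε)
    (.of_forall hmeas) hint (F' := fun s x => -(k * g x * u x / (c + s * u x) ^ (k + 1)))
    (Measurable.aestronglyMeasurable (by fun_prop))
    (bound := fun _ => k * (Cg * Cu) / (δ / 2) ^ (k + 1)) ?_ (integrable_const _) ?_).2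
  · filter_upwards [hgC, huC, hnear] with x hgx hux hx s hs
    have hnum : |k * g x * u x| ≤ k * (Cg * Cu) := by
      rw [abs_mul, abs_mul, Nat.abs_cast, mul_assoc]
      exact mul_le_mul_of_nonneg_left (mul_le_mul hgx hux (abs_nonneg _)
        ((abs_nonneg _).trans hgx)) k.cast_nonneg
    rw [norm_neg, Real.norm_eq_abs]
    exact abs_div_pow_le (half_pos hδ) hnum (hx s hs) (k + 1)
  · filter_upwards [hnear] with x hx s hs
    exact hasDerivAt_div_pow_affine _ _ _ _ k ((half_pos hδ).trans_le (hx s hs)).ne'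

lemma deriv_deriv_integral_div (hg : Measurable g) (hu : Measurable u)
    (hδ : 0 < δ) (hgC : ∀ᵐ x ∂μ, |g x| ≤ Cg) (huC : ∀ᵐ x ∂μ, |u x| ≤ Cu)
    (hlow : ∀ᵐ x ∂μ, δ ≤ c + t * u x) :
    deriv (deriv fun s => ∫ x, g x / (c + s * u x) ∂μ) t =
      2 * ∫ x, g x / (c + t * u x) ^ 3 * u x ^ 2 ∂μ := by
  obtain ⟨ε, hε, hnear⟩ := exists_ae_forall_mem_ball_half_le hδ huC hlow
  have hguC : ∀ᵐ x ∂μ, |g x * u x| ≤ Cg * Cu := by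
    filter_upwards [hgC, huC] with x hgx hux
    rw [abs_mul]
    exact mul_le_mul hgx hux (abs_nonneg _) ((abs_nonneg _).trans hgx)
  have hfirst : deriv (fun s => ∫ x, g x / (c + s * u x) ∂μ) =ᶠ[𝓝 t]
      fun s => -∫ x, g x * u x / (c + s * u x) ^ 2 ∂μ := by
    filter_upwards [ball_mem_nhds t hε] with s hs
    have h := hasDerivAt_integral_div_pow hg hu (half_pos hδ) hgC huC
      (hnear.mono fun x hx => hx s hs) 1
    simp only [pow_one, Nat.cast_one, one_mul, integral_neg] at h
    simp only [h.deriv]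
  have hsecond := (hasDerivAt_integral_div_pow (g := fun x => g x * u x) (hg.mul hu) hu hδ
    hguC huC hlow 2).fun_neg
  rw [hfirst.deriv_eq, hsecond.deriv, integral_neg, neg_neg, ← integral_const_mul]
  congr 1 with x
  push_cast
  ring

end ParametricIntegral

lemma deriv_deriv_const_sub_mul {𝕜 : Type*} [NontriviallyNormedField 𝕜] (K c : 𝕜) (F : 𝕜 → 𝕜)
    (t : 𝕜) : deriv (deriv fun s => K - c * F s) t = -(c * deriv (deriv F) t) := by
  rw [deriv_const_sub', deriv_const_mul_field', deriv.fun_neg, deriv_const_mul_field']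

lemma deriv_deriv_setIntegral_div_of_isCompact {X : Type*} [TopologicalSpace X] [T2Space X]
    [MeasurableSpace X] [OpensMeasurableSpace X] {μ : Measure X} {K : Set X} (hK : IsCompact K)
    [IsFiniteMeasure (μ.restrict K)] {g u : X → ℝ} (hg : Continuous g) (hu : Continuous u)
    {c t : ℝ} (hpos : ∀ x ∈ K, 0 < c + t * u x) :
    deriv (deriv fun s => ∫ x in K, g x / (c + s * u x) ∂μ) t =
      2 * ∫ x in K, g x / (c + t * u x) ^ 3 * u x ^ 2 ∂μ := by
  obtain ⟨Cg, hCg⟩ := hK.exists_bound_of_continuousOn hg.continuousOn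
  obtain ⟨Cu, hCu⟩ := hK.exists_bound_of_continuousOn hu.continuousOn
  obtain ⟨δ, hδ, hlow⟩ := hK.exists_forall_le' (by fun_prop) hpos
  have hKm := hK.isClosed.measurableSet
  exact deriv_deriv_integral_div hg.measurable hu.measurable hδ
    (ae_restrict_of_forall_mem hKm hCg) (ae_restrict_of_forall_mem hKm hCu)
    (ae_restrict_of_forall_mem hKm hlow)

theorem stmt9_general (d : ℕ) (A : Matrix (Fin d) (Fin d) ℝ)
    (p Pd : EuclideanSpace ℝ (Fin d) → ℝ)
    (hp : ∀ x, p x = (1 / 2) * ∑ i : Fin d, ∑ j : Fin d, A i j * x i * x j)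
    (hPd : ∀ x, Pd x = ‖x‖ ^ 2 / (2 * d))
    (pt : ℝ → EuclideanSpace ℝ (Fin d) → ℝ)
    (hpt : ∀ s x, pt s x = s * p x + (1 - s) * Pd x)
    (gt : EuclideanSpace ℝ (Fin d) → EuclideanSpace ℝ (Fin d))
    (hgt : ∀ x, gt x = gradient p x - ⟪gradient p x, x⟫ • x)
    (a b : ℝ)
    (hpos : ∀ s ∈ Set.Ioo a b, ∀ x ∈ sphere (0 : EuclideanSpace ℝ (Fin d)) 1, 0 < pt s x)
    (q : ℝ → ℝ)
    (hq : ∀ s, q s =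
      (∫ x in sphere (0 : EuclideanSpace ℝ (Fin d)) 1, ‖gt x‖ ^ 2 ∂(μH[(d : ℝ) - 1])) +
        4 * (∫ x in sphere (0 : EuclideanSpace ℝ (Fin d)) 1,
              (p x - Pd x) ^ 2 ∂(μH[(d : ℝ) - 1])) -
        (1 / (2 * d)) * ∫ x in sphere (0 : EuclideanSpace ℝ (Fin d)) 1,
              ‖gt x‖ ^ 2 / pt s x ∂(μH[(d : ℝ) - 1]))
    (t : ℝ) (ht : t ∈ Set.Ioo a b) :
    deriv (deriv q) t =
      -(1 / d) * ∫ x in sphere (0 : EuclideanSpace ℝ (Fin d)) 1,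
          (‖gt x‖ ^ 2 / (pt t x) ^ 3) * (p x - Pd x) ^ 2 ∂(μH[(d : ℝ) - 1]) ∧
    deriv (deriv q) t ≤ 0 := by
  set S := sphere (0 : EuclideanSpace ℝ (Fin d)) 1
  have : IsFiniteMeasure ((μH[(d : ℝ) - 1]).restrict S) := isFiniteMeasure_restrict.2 <| by
    simpa using (hausdorffMeasure_sphere_lt_top (E := EuclideanSpace ℝ (Fin d))).ne
  have hp_smooth : ContDiff ℝ 1 p := by rw [funext hp]; fun_prop
  have hgt_cont : Continuous gt := by
    have := hp_smooth.continuous_gradient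
    rw [funext hgt]; fun_prop
  have hPd_cont : Continuous Pd := by rw [funext hPd]; fun_prop
  have hpt_S : ∀ s, ∀ x ∈ S, pt s x = 1 / (2 * d) + s * (p x - Pd x) := fun s x hx => by
    rw [hpt, hPd, mem_sphere_zero_iff_norm.1 hx]; ring
  set c : ℝ := 1 / (2 * (d : ℝ))
  set g := fun x => ‖gt x‖ ^ 2
  set u := fun x => p x - Pd x
  have hS : IsCompact S := isCompact_sphere 0 1
  have hpt_int : ∀ s, ∫ x in S, g x / pt s x ∂(μH[(d : ℝ) - 1]) =
      ∫ x in S, g x / (c + s * u x) ∂(μH[(d : ℝ) - 1]) := fun s =>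
    setIntegral_congr_fun hS.measurableSet fun x hx => by rw [hpt_S s x hx]
  obtain ⟨K, hqF⟩ : ∃ K, q = fun s =>
      K - c * ∫ x in S, g x / (c + s * u x) ∂(μH[(d : ℝ) - 1]) :=
    ⟨_, funext fun s => by rw [hq s, hpt_int s]⟩
  have hformula : deriv (deriv q) t =
      -(1 / d) * ∫ x in S, (g x / (pt t x) ^ 3) * u x ^ 2 ∂(μH[(d : ℝ) - 1]) := by
    rw [hqF, deriv_deriv_const_sub_mul, deriv_deriv_setIntegral_div_of_isCompact hS
        (by fun_prop) (by fun_prop) fun x hx => hpt_S t x hx ▸ hpos t ht x hx, eq_comm,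
      setIntegral_congr_fun hS.measurableSet fun x hx => by rw [hpt_S t x hx]]
    ring
  refine ⟨hformula, hformula ▸ mul_nonpos_of_nonpos_of_nonneg (by simp) ?_⟩
  exact setIntegral_nonneg hS.measurableSet fun x hx =>
    mul_nonneg (div_nonneg (sq_nonneg _) (pow_nonneg (hpos t ht x hx).le 3)) (sq_nonneg _)

theorem stmt9 (d : ℕ) (hd : 1 ≤ d) (A : Matrix (Fin d) (Fin d) ℝ)
    (hsymm : A.IsSymm) (hpsd : A.PosSemidef) (htr : A.trace = 1)
    (p Pd : EuclideanSpace ℝ (Fin d) → ℝ)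
    (hp : ∀ x, p x = (1 / 2) * ∑ i : Fin d, ∑ j : Fin d, A i j * x i * x j)
    (hPd : ∀ x, Pd x = ‖x‖ ^ 2 / (2 * d))
    (pt : ℝ → EuclideanSpace ℝ (Fin d) → ℝ)
    (hpt : ∀ s x, pt s x = s * p x + (1 - s) * Pd x)
    (gt : EuclideanSpace ℝ (Fin d) → EuclideanSpace ℝ (Fin d))
    (hgt : ∀ x, gt x = gradient p x - ⟪gradient p x, x⟫ • x)
    (a b : ℝ) (hab : a < b)
    (hpos : ∀ s ∈ Set.Ioo a b, ∀ x ∈ sphere (0 : EuclideanSpace ℝ (Fin d)) 1, 0 < pt s x)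
    (q : ℝ → ℝ)
    (hq : ∀ s, q s =
      (∫ x in sphere (0 : EuclideanSpace ℝ (Fin d)) 1, ‖gt x‖ ^ 2 ∂(μH[(d : ℝ) - 1])) +
        4 * (∫ x in sphere (0 : EuclideanSpace ℝ (Fin d)) 1,
              (p x - Pd x) ^ 2 ∂(μH[(d : ℝ) - 1])) -
        (1 / (2 * d)) * ∫ x in sphere (0 : EuclideanSpace ℝ (Fin d)) 1,
              ‖gt x‖ ^ 2 / pt s x ∂(μH[(d : ℝ) - 1]))
    (t : ℝ) (ht : t ∈ Set.Ioo a b) :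
    deriv (deriv q) t =
      -(1 / d) * ∫ x in sphere (0 : EuclideanSpace ℝ (Fin d)) 1,
          (‖gt x‖ ^ 2 / (pt t x) ^ 3) * (p x - Pd x) ^ 2 ∂(μH[(d : ℝ) - 1]) ∧
    deriv (deriv q) t ≤ 0 :=
  stmt9_general d A p Pd hp hPd pt hpt gt hgt a b hpos q hq t ht
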